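/- arXiv:1610.07207 — 3 statements merged into one kernel-verified Lean document; each statement's English description precedes it below -/
import Mathlib

section
/- Let i : E → F be a t-exact fully faithful functor of stable ∞-categories equipped with t-structures. Then the induced exact functor i^♥ : E^♥ → F^♥ on hearts is fully faithful and exhibits E^♥ as a weak Serre subcategory of F^♥: the essential image of i^♥ is closed under extensions in F^♥. -/
/-!
A short exact sequence `0 → i x → y → i z → 0` in the heart of `D` underlies a distinguished
triangle: the cone of a monomorphism of the heart lies in the heart (its `H⁻¹` is the kernel),
and is then the cokernel. Hence `y` lies in the essential image of `i`, which is closed under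
extensions because `i` is fully faithful and triangulated. A t-exact faithful functor reflects
`≤ n` and `≥ n` (by orthogonality), so the preimage of `y` lies in the heart of `C`.
-/

open CategoryTheory Category Limits Pretriangulated Triangulated

universe v u u'

namespace CategoryTheory.Triangulated.TStructure

variable {D : Type*} [Category* D] [Preadditive D] [HasZeroObject D] [HasShift D ℤ]
  [∀ n : ℤ, (shiftFunctor D n).Additive] [Pretriangulated D] (t : TStructure D)

instance (X : t.heart.FullSubcategory) : t.IsLE X.obj 0 := ⟨X.property.1⟩

instance (X : t.heart.FullSubcategory) : t.IsGE X.obj 0 := ⟨X.property.2⟩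

lemma zero_of_comp_heart_mono {X Y : t.heart.FullSubcategory} (f : X ⟶ Y) [Mono f]
    {S : D} [t.IsLE S 0] (α : S ⟶ X.obj) (hα : α ≫ f.hom = 0) : α = 0 := by
  obtain ⟨S', S'', hS', hS'', a, b, c, hT⟩ := t.exists_triangle S (-1) 0 (by lia)
  have : t.IsLE S' (-1) := ⟨hS'⟩
  have hS'₁ : t.IsLE (S'⟦(1 : ℤ)⟧) (-2) := t.isLE_shift S' (-1) 1 (-2)
  let S''h : t.heart.FullSubcategory := ⟨S'', (t.mem_heart_iff S'').2
    ⟨t.isLE₂ _ (rot_of_distTriang _ hT) 0 ‹_› (t.isLE_of_le (S'⟦(1 : ℤ)⟧) (-2) 0),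
      ⟨hS''⟩⟩⟩
  -- `α` factors through the truncation `τ^{≥0} S = S''`, which lies in the heart.
  obtain ⟨β, rfl⟩ : ∃ β : S'' ⟶ X.obj, α = b ≫ β := Triangle.yoneda_exact₂ _ hT α
    (t.zero_of_isLE_of_isGE _ (-1) 0 (by lia) ‹_› inferInstance)
  have hβ : β ≫ f.hom = 0 := by
    obtain ⟨s, hs⟩ : ∃ s : S'⟦(1 : ℤ)⟧ ⟶ Y.obj, β ≫ f.hom = c ≫ s :=
      Triangle.yoneda_exact₃ _ hT (β ≫ f.hom) ((assoc b β f.hom).symm.trans hα)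
    rw [hs, t.zero_of_isLE_of_isGE s (-2) 0 (by lia) hS'₁ inferInstance, comp_zero]
  have : (ObjectProperty.homMk β : S''h ⟶ X) = 0 :=
    (cancel_mono f).1 (by ext; simpa using hβ)
  rw [show β = 0 from congrArg InducedCategory.Hom.hom this, comp_zero]

lemma heart_obj₃_of_mono {X Y : t.heart.FullSubcategory} (f : X ⟶ Y) [Mono f] {Z : D}
    {g : Y.obj ⟶ Z} {h : Z ⟶ X.obj⟦(1 : ℤ)⟧}
    (hT : Triangle.mk f.hom g h ∈ distTriang D) : t.heart Z := by
  have : t.IsLE (X.obj⟦(1 : ℤ)⟧) (-1) := t.isLE_shift X.obj 0 1 (-1)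
  rw [mem_heart_iff]
  refine ⟨t.isLE₂ _ (rot_of_distTriang _ hT) 0 (inferInstanceAs (t.IsLE Y.obj 0))
    (t.isLE_of_le (X.obj⟦(1 : ℤ)⟧) (-1) 0), ?_⟩
  rw [← t.isGE_shift_iff Z 0 (-1) 1, t.isGE_iff_orthogonal 0 1 rfl]
  intro S u _
  -- `Z⟦-1⟧ ⟶ X ⟶ Y` is exact, and `u` dies in `X` since `f` is a monomorphism of the heart.
  have hT₁ := inv_rot_of_distTriang _ hT
  obtain ⟨v, rfl⟩ := Triangle.coyoneda_exact₂ _ (inv_rot_of_distTriang _ hT₁) u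
    (t.zero_of_comp_heart_mono f _
      ((assoc _ _ _).trans ((u ≫= comp_distTriang_mor_zero₁₂ _ hT₁).trans comp_zero)))
  have : t.IsGE (Y.obj⟦(-1 : ℤ)⟧) 1 := t.isGE_shift Y.obj 0 (-1) 1
  rw [t.zero_of_isLE_of_isGE v 0 1 (by lia) ‹_› this]
  exact zero_comp

lemma epi_of_distTriang_heart {Y Z : t.heart.FullSubcategory} (g : Y ⟶ Z) {W : D}
    {f : W ⟶ Y.obj} {h : Z.obj ⟶ W⟦(1 : ℤ)⟧} [t.IsLE W 0]
    (hT : Triangle.mk f g.hom h ∈ distTriang D) : Epi g := by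
  have : t.IsLE (W⟦(1 : ℤ)⟧) (-1) := t.isLE_shift W 0 1 (-1)
  refine Preadditive.epi_of_cancel_zero _ fun {P} m hm => ?_
  obtain ⟨s, hs⟩ : ∃ s : W⟦(1 : ℤ)⟧ ⟶ P.obj, m.hom = h ≫ s :=
    Triangle.yoneda_exact₃ _ hT m.hom (congrArg InducedCategory.Hom.hom hm)
  ext
  rw [hs, t.zero_of_isLE_of_isGE s (-1) 0 (by lia) this inferInstance, comp_zero]
  rfl

noncomputable def isColimitCokernelCoforkOfDistTriang {X Y Z : t.heart.FullSubcategory}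
    (f : X ⟶ Y) (g : Y ⟶ Z) (w : f ≫ g = 0) {h : Z.obj ⟶ X.obj⟦(1 : ℤ)⟧}
    (hT : Triangle.mk f.hom g.hom h ∈ distTriang D) : IsColimit (CokernelCofork.ofπ g w) :=
  have := t.epi_of_distTriang_heart g hT
  CokernelCofork.IsColimit.ofπ' g w fun k hk =>
    have hk' := Triangle.yoneda_exact₂ _ hT k.hom (congrArg InducedCategory.Hom.hom hk)
    ⟨ObjectProperty.homMk hk'.choose, by ext; exact hk'.choose_spec.symm⟩

lemma exists_distTriang_of_mono_of_isColimit {X Y Z : t.heart.FullSubcategory}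
    (f : X ⟶ Y) (g : Y ⟶ Z) (w : f ≫ g = 0) [Mono f]
    (hg : IsColimit (CokernelCofork.ofπ g w)) :
    ∃ δ : Z.obj ⟶ X.obj⟦(1 : ℤ)⟧, Triangle.mk f.hom g.hom δ ∈ distTriang D := by
  obtain ⟨W, π, δ, hT⟩ := distinguished_cocone_triangle f.hom
  let π' : Y ⟶ ⟨W, t.heart_obj₃_of_mono f hT⟩ := ObjectProperty.homMk π
  have w' : f ≫ π' = 0 := by ext; exact comp_distTriang_mor_zero₁₂ _ hT
  have hπ := t.isColimitCokernelCoforkOfDistTriang f π' w' hT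
  let e := hπ.coconePointUniqueUpToIso hg
  have he : π ≫ e.hom.hom = g.hom :=
    congrArg InducedCategory.Hom.hom (hπ.comp_coconePointUniqueUpToIso_hom hg .one)
  refine ⟨e.inv.hom ≫ δ, isomorphic_distinguished _ hT _
    (Triangle.isoMk _ _ (Iso.refl _) (Iso.refl _) (t.heart.ι.mapIso e).symm ?_ ?_ ?_)⟩
  · show f.hom ≫ 𝟙 Y.obj = 𝟙 X.obj ≫ f.hom
    simp
  · show g.hom ≫ e.inv.hom = 𝟙 Y.obj ≫ π
    simp [← he]
  · show (e.inv.hom ≫ δ) ≫ (𝟙 X.obj)⟦(1 : ℤ)⟧' = e.inv.hom ≫ δ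
    simp

end CategoryTheory.Triangulated.TStructure

namespace CategoryTheory.Functor

variable {C : Type*} [Category* C] [Preadditive C] [HasZeroObject C] [HasShift C ℤ]
  [∀ n : ℤ, (shiftFunctor C n).Additive] [Pretriangulated C]
  {D : Type*} [Category* D] [Preadditive D] [HasZeroObject D] [HasShift D ℤ]
  [∀ n : ℤ, (shiftFunctor D n).Additive] [Pretriangulated D]
  {tC : TStructure C} {tD : TStructure D} (i : C ⥤ D) [i.CommShift ℤ]

lemma isLE_obj_of_le_zero (hle : ∀ X : C, tC.le 0 X → tD.le 0 (i.obj X)) (X : C) (n : ℤ)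
    [tC.IsLE X n] : tD.IsLE (i.obj X) n := by
  have := tC.isLE_shift X n n 0
  have : tD.IsLE (i.obj (X⟦n⟧)) 0 := ⟨hle _ (tC.le_of_isLE _ 0)⟩
  have : tD.IsLE ((i.obj X)⟦n⟧) 0 :=
    tD.isLE_of_iso (X := i.obj (X⟦n⟧)) ((i.commShiftIso n).app X) 0
  exact tD.isLE_of_shift (i.obj X) n n 0

lemma isGE_obj_of_ge_zero (hge : ∀ X : C, tC.ge 0 X → tD.ge 0 (i.obj X)) (X : C) (n : ℤ)
    [tC.IsGE X n] : tD.IsGE (i.obj X) n := by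
  have := tC.isGE_shift X n n 0
  have : tD.IsGE (i.obj (X⟦n⟧)) 0 := ⟨hge _ (tC.ge_of_isGE _ 0)⟩
  have : tD.IsGE ((i.obj X)⟦n⟧) 0 :=
    tD.isGE_of_iso (X := i.obj (X⟦n⟧)) ((i.commShiftIso n).app X) 0
  exact tD.isGE_of_shift (i.obj X) n n 0

lemma isLE_of_isLE_obj [i.Faithful] [i.PreservesZeroMorphisms]
    (hge : ∀ X : C, tC.ge 0 X → tD.ge 0 (i.obj X)) (X : C) (n : ℤ) [tD.IsLE (i.obj X) n] :
    tC.IsLE X n := by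
  rw [tC.isLE_iff_orthogonal n (n + 1) rfl]
  intro Y f _
  have := i.isGE_obj_of_ge_zero hge Y (n + 1)
  exact i.map_injective (by rw [tD.zero (i.map f) n (n + 1), i.map_zero])

lemma isGE_of_isGE_obj [i.Faithful] [i.PreservesZeroMorphisms]
    (hle : ∀ X : C, tC.le 0 X → tD.le 0 (i.obj X)) (X : C) (n : ℤ) [tD.IsGE (i.obj X) n] :
    tC.IsGE X n := by
  rw [tC.isGE_iff_orthogonal (n - 1) n (by lia)]
  intro Y f _
  have := i.isLE_obj_of_le_zero hle Y (n - 1)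
  exact i.map_injective (by rw [tD.zero (i.map f) (n - 1) n, i.map_zero])

end CategoryTheory.Functor

/-- Let `i : C ⥤ D` be a t-exact fully faithful triangulated functor between
(pre)triangulated categories with t-structures `tC`, `tD`.  Then the induced functor on hearts
is fully faithful, and its essential image is closed under extensions in the heart of `D`:
any short exact sequence `0 → i x → y → i z → 0` in `D^♥` with `x, z ∈ C^♥` has middle term
isomorphic to the image of an object of `C^♥`.  (So `C^♥` is a weak Serre subcategory of
`D^♥`.) -/
theorem heart_of_t_exact_fully_faithful_is_weak_serre
    (C : Type u) [Category.{v} C] [Preadditive C] [HasZeroObject C] [HasShift C ℤ]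
    [∀ n : ℤ, (shiftFunctor C n).Additive] [Pretriangulated C]
    (D : Type u') [Category.{v} D] [Preadditive D] [HasZeroObject D] [HasShift D ℤ]
    [∀ n : ℤ, (shiftFunctor D n).Additive] [Pretriangulated D]
    (tC : TStructure C) (tD : TStructure D)
    (i : C ⥤ D) [i.CommShift ℤ] [i.IsTriangulated] [i.Full] [i.Faithful]
    (hle : ∀ X : C, tC.le 0 X → tD.le 0 (i.obj X))
    (hge : ∀ X : C, tC.ge 0 X → tD.ge 0 (i.obj X)) :
    -- the induced functor on hearts is fully faithful
    (∀ (X Y : C), (tC.le 0 X ∧ tC.ge 0 X) → (tC.le 0 Y ∧ tC.ge 0 Y) →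
      Function.Bijective (fun φ : X ⟶ Y => i.map φ)) ∧
    -- the heart of `C` is closed under extensions in the heart of `D`
    (∀ (x z : C) (hx : tC.le 0 x ∧ tC.ge 0 x) (hz : tC.le 0 z ∧ tC.ge 0 z)
      (y : ObjectProperty.FullSubcategory (fun A : D => tD.le 0 A ∧ tD.ge 0 A))
      (f : (⟨i.obj x, hle x hx.1, hge x hx.2⟩ :
            ObjectProperty.FullSubcategory (fun A : D => tD.le 0 A ∧ tD.ge 0 A)) ⟶ y)
      (g : y ⟶ (⟨i.obj z, hle z hz.1, hge z hz.2⟩ :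
            ObjectProperty.FullSubcategory (fun A : D => tD.le 0 A ∧ tD.ge 0 A)))
      (w : f ≫ g = 0),
      Nonempty (IsLimit (KernelFork.ofι f w)) →
      Nonempty (IsColimit (CokernelCofork.ofπ g w)) →
      ∃ y' : C, (tC.le 0 y' ∧ tC.ge 0 y') ∧ Nonempty (i.obj y' ≅ y.obj)) := by
  refine ⟨fun X Y _ _ => ⟨i.map_injective, i.map_surjective⟩, ?_⟩
  rintro x z _ _ y f g w ⟨hf⟩ ⟨hg⟩
  have : Mono (C := tD.heart.FullSubcategory) f := mono_of_isLimit_fork hf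
  obtain ⟨δ, hT⟩ := tD.exists_distTriang_of_mono_of_isColimit f g w hg
  obtain ⟨y', ⟨e : i.obj y' ≅ y.obj⟩⟩ := i.essImage.ext_of_isTriangulatedClosed₂ _ hT
    (i.obj_mem_essImage x) (i.obj_mem_essImage z)
  have : tD.IsLE (i.obj y') 0 := ⟨(tD.le 0).prop_of_iso e.symm y.property.1⟩
  have : tD.IsGE (i.obj y') 0 := ⟨(tD.ge 0).prop_of_iso e.symm y.property.2⟩
  exact ⟨y', ⟨(i.isLE_of_isLE_obj hge y' 0).le, (i.isGE_of_isGE_obj hle y' 0).ge⟩, ⟨e⟩⟩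
end

section
/- Let E be a small stable ∞-category (or small triangulated category) admitting a bounded t-structure. Then E is idempotent complete (Karoubian): every idempotent endomorphism splits. -/
/-!
Induction on the amplitude. For `X` in a shifted heart, an idempotent `e` of `X` splits through
`τ_{≥c}` of the cone of `1 - e`. In general `e` acts on the truncation triangle
`τ_{<b} X ⟶ X ⟶ τ_{≥b} X ⟶ …`; splittings of its actions on the outer terms assemble into a
distinguished triangle `T'` which, by the five lemma, is a retract of the truncation triangle
after correcting by an automorphism that is the identity on the outer terms. So `T'.obj₂` is the
image of an idempotent `p` of `X` that agrees with `e` on both outer terms, whence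
`(p - e)² = 0`, and two idempotents whose difference squares to zero are conjugate.
-/

open CategoryTheory Category Limits Preadditive Pretriangulated Triangulated

universe v u

theorem IsIdempotentElem.exists_unit_mul_eq_mul_of_sub_mul_self_eq_zero {R : Type*} [Ring R]
    {e f : R} (he : IsIdempotentElem e) (hf : IsIdempotentElem f) (h : (f - e) * (f - e) = 0) :
    ∃ u : Rˣ, ↑u * e = f * ↑u := by
  obtain ⟨d, rfl⟩ : ∃ d, f = e + d := ⟨f - e, by abel⟩
  rw [add_sub_cancel_left] at h
  have hsum : e * d + d * e = d := by
    have := hf.eq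
    rw [show (e + d) * (e + d) = e * e + (e * d + d * e) + d * d by noncomm_ring, he.eq, h,
      add_zero] at this
    exact add_left_cancel this
  refine ⟨⟨1 + 2 * (d * e) - d, 1 + 2 * (e * d) - d, ?_, ?_⟩, ?_⟩
  · calc (1 + 2 * (d * e) - d) * (1 + 2 * (e * d) - d)
        = 1 + 2 * (e * d + d * e - d) + 4 * (d * (e * e - e) * d) + d * d := by noncomm_ring
      _ = 1 := by rw [he.eq, hsum, h]; simp
  · calc (1 + 2 * (e * d) - d) * (1 + 2 * (d * e) - d)
        = 1 + 2 * (e * d + d * e - d) + 4 * (e * (d * d) * e) - 2 * (e * (d * d))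
          - 2 * (d * d * e) + d * d := by noncomm_ring
      _ = 1 := by rw [hsum, h]; simp
  · show (1 + 2 * (d * e) - d) * e = (e + d) * (1 + 2 * (d * e) - d)
    rw [← sub_eq_zero]
    calc (1 + 2 * (d * e) - d) * e - (e + d) * (1 + 2 * (d * e) - d)
        = 2 * (d * (e * e - e)) + (e * d + d * e - d) - 2 * (e * (e * d + d * e - d))
          + 2 * ((e * e - e) * d) - 2 * (d * d * e) + d * d := by noncomm_ring
      _ = 0 := by rw [he.eq, hsum, h]; simp

namespace CategoryTheory

def IsSplitIdempotent {C : Type u} [Category.{v} C] {X : C} (e : X ⟶ X) : Prop :=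
  ∃ (Y : C) (i : Y ⟶ X) (r : X ⟶ Y), i ≫ r = 𝟙 Y ∧ r ≫ i = e

namespace IsSplitIdempotent

variable {C : Type u} [Category.{v} C] {X : C}

lemma comp_self {e : X ⟶ X} (he : IsSplitIdempotent e) : e ≫ e = e := by
  obtain ⟨Y, i, r, hir, rfl⟩ := he
  rw [assoc, reassoc_of% hir]

lemma of_sub_comp_self_eq_zero [Preadditive C] {e p : X ⟶ X} (hp : IsSplitIdempotent p)
    (he : e ≫ e = e) (hd : (p - e) ≫ (p - e) = 0) : IsSplitIdempotent e := by
  obtain ⟨u, hu⟩ := IsIdempotentElem.exists_unit_mul_eq_mul_of_sub_mul_self_eq_zero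
    (R := End X) he hp.comp_self hd
  let φ : X ≅ X := ⟨u.val, u.inv, u.inv_val, u.val_inv⟩
  have hφ : e ≫ φ.hom = φ.hom ≫ p := hu
  obtain ⟨Y, i, r, hir, rfl⟩ := hp
  exact ⟨Y, i ≫ φ.inv, φ.hom ≫ r, by simp [hir], by simp [← reassoc_of% hφ]⟩

end IsSplitIdempotent

namespace Pretriangulated

variable {C : Type u} [Category.{v} C] [Preadditive C] [HasZeroObject C] [HasShift C ℤ]
  [∀ n : ℤ, (shiftFunctor C n).Additive] [Pretriangulated C]

lemma sub_hom₂_comp_self_eq_zero {T : Triangle C} (hT : T ∈ distTriang C) {φ ψ : T ⟶ T}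
    (h₁ : φ.hom₁ = ψ.hom₁) (h₃ : φ.hom₃ = ψ.hom₃) :
    (φ.hom₂ - ψ.hom₂) ≫ (φ.hom₂ - ψ.hom₂) = 0 := by
  obtain ⟨k, hk⟩ := Triangle.coyoneda_exact₂ _ hT (φ.hom₂ - ψ.hom₂) (by
    rw [sub_comp, ← φ.comm₂, ← ψ.comm₂, h₃, sub_self])
  rw [hk, assoc, ← hk, comp_sub, φ.comm₁, ψ.comm₁, h₁, sub_self, comp_zero]

lemma exists_retract_of_isSplitIdempotent_hom₁_hom₃ {T : Triangle C} (hT : T ∈ distTriang C)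
    (φ : T ⟶ T) (h₁ : IsSplitIdempotent φ.hom₁) (h₃ : IsSplitIdempotent φ.hom₃) :
    ∃ (T' : Triangle C) (_ : T' ∈ distTriang C) (ι : T' ⟶ T) (ρ : T ⟶ T'),
      (ι ≫ ρ).hom₁ = 𝟙 _ ∧ (ι ≫ ρ).hom₃ = 𝟙 _ ∧ (ρ ≫ ι).hom₁ = φ.hom₁ ∧ (ρ ≫ ι).hom₃ = φ.hom₃ := by
  obtain ⟨A, iA, rA, hA, hφ₁⟩ := h₁
  obtain ⟨B, iB, rB, hB, hφ₃⟩ := h₃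
  obtain ⟨X, f, g, hT'⟩ := distinguished_cocone_triangle₂ (iB ≫ T.mor₃ ≫ rA⟦(1 : ℤ)⟧')
  have hι : (iB ≫ T.mor₃ ≫ rA⟦(1 : ℤ)⟧') ≫ iA⟦(1 : ℤ)⟧' = iB ≫ T.mor₃ := by
    rw [assoc, assoc, ← Functor.map_comp, hφ₁, φ.comm₃, ← hφ₃, assoc, reassoc_of% hB]
  have hρ : T.mor₃ ≫ rA⟦(1 : ℤ)⟧' = rB ≫ iB ≫ T.mor₃ ≫ rA⟦(1 : ℤ)⟧' := by
    rw [reassoc_of% hφ₃, ← φ.comm₃_assoc, ← Functor.map_comp, ← hφ₁, assoc, hA, comp_id]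
  obtain ⟨i, hi₁, hi₂⟩ := complete_distinguished_triangle_morphism₂ _ T hT' hT iA iB hι
  obtain ⟨r, hr₁, hr₂⟩ := complete_distinguished_triangle_morphism₂ T _ hT hT' rA rB hρ
  exact ⟨_, hT', Triangle.homMk _ _ iA i iB hi₁ hi₂ hι, Triangle.homMk _ _ rA r rB hr₁ hr₂ hρ,
    hA, hB, hφ₁, hφ₃⟩

lemma isSplitIdempotent_hom₂ {T : Triangle C} (hT : T ∈ distTriang C) (φ : T ⟶ T)
    (h₁ : IsSplitIdempotent φ.hom₁) (h₂ : φ.hom₂ ≫ φ.hom₂ = φ.hom₂)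
    (h₃ : IsSplitIdempotent φ.hom₃) : IsSplitIdempotent φ.hom₂ := by
  obtain ⟨T', hT', ι, ρ, hu₁, hu₃, hp₁, hp₃⟩ :=
    exists_retract_of_isSplitIdempotent_hom₁_hom₃ hT φ h₁ h₃
  have : IsIso (ι ≫ ρ).hom₁ := by rw [hu₁]; infer_instance
  have : IsIso (ι ≫ ρ).hom₃ := by rw [hu₃]; infer_instance
  have : IsIso (ι ≫ ρ) := Triangle.isIso_of_isIsos _ inferInstance
    (isIso₂_of_isIso₁₃ _ hT' hT' inferInstance inferInstance) inferInstance
  have hinv₁ : (inv (ι ≫ ρ)).hom₁ = 𝟙 _ := by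
    have := congrArg TriangleMorphism.hom₁ (IsIso.hom_inv_id (ι ≫ ρ))
    rwa [comp_hom₁ (ι ≫ ρ), hu₁, id_comp] at this
  have hinv₃ : (inv (ι ≫ ρ)).hom₃ = 𝟙 _ := by
    have := congrArg TriangleMorphism.hom₃ (IsIso.hom_inv_id (ι ≫ ρ))
    rwa [comp_hom₃ (ι ≫ ρ), hu₃, id_comp] at this
  let p : T ⟶ T := (ρ ≫ inv (ι ≫ ρ)) ≫ ι
  have hp : IsSplitIdempotent p.hom₂ := ⟨_, ι.hom₂, (ρ ≫ inv (ι ≫ ρ)).hom₂, by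
    rw [← comp_hom₂, ← assoc, IsIso.hom_inv_id, id_hom₂], rfl⟩
  refine hp.of_sub_comp_self_eq_zero h₂ (sub_hom₂_comp_self_eq_zero hT ?_ ?_)
  · rw [← hp₁, comp_hom₁, comp_hom₁, hinv₁, comp_id, comp_hom₁]
  · rw [← hp₃, comp_hom₃, comp_hom₃, hinv₃, comp_id, comp_hom₃]

end Pretriangulated

end CategoryTheory

namespace CategoryTheory.Triangulated.TStructure

variable {C : Type u} [Category.{v} C] [Preadditive C] [HasZeroObject C] [HasShift C ℤ]
  [∀ n : ℤ, (shiftFunctor C n).Additive] [Pretriangulated C] (t : TStructure C)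

lemma isGE_truncLT_obj_of_isGE (X : C) (a b : ℤ) (h : a ≤ b + 1 := by lia) [t.IsGE X a] :
    t.IsGE ((t.truncLT b).obj X) a := by
  have := t.isGE_shift ((t.truncGE b).obj X) b (-1) (b + 1)
  have := t.isGE_of_ge (((t.truncGE b).obj X)⟦(-1 : ℤ)⟧) a (b + 1)
  exact t.isGE₂ _ (inv_rot_of_distTriang _ (t.triangleLTGE_distinguished b X)) a this ‹_›

lemma isLE_truncGE_obj_of_isLE (X : C) (a b : ℤ) (h : a ≤ b + 2 := by lia) [t.IsLE X b] :
    t.IsLE ((t.truncGE a).obj X) b := by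
  have := t.isLE_shift ((t.truncLT a).obj X) (a - 1) 1 (a - 2)
  have := t.isLE_of_le (((t.truncLT a).obj X)⟦(1 : ℤ)⟧) (a - 2) b
  exact t.isLE₂ _ (rot_of_distTriang _ (t.triangleLTGE_distinguished a X)) b ‹_› this

lemma isSplitIdempotent_of_isLE_of_isGE {X : C} (c : ℤ) [t.IsLE X c] [t.IsGE X c]
    {e : X ⟶ X} (he : e ≫ e = e) : IsSplitIdempotent e := by
  obtain ⟨Z, g, h, hT⟩ := distinguished_cocone_triangle (𝟙 X - e)
  have heg : e ≫ g = g := by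
    have : (𝟙 X - e) ≫ g = 0 := comp_distTriang_mor_zero₁₂ _ hT
    rwa [sub_comp, id_comp, sub_eq_zero, eq_comm] at this
  obtain ⟨v, hv⟩ : ∃ v : Z ⟶ X, e = g ≫ v := Triangle.yoneda_exact₂ _ hT e (by
    change (𝟙 X - e) ≫ e = 0
    rw [sub_comp, id_comp, he, sub_self])
  let π : Z ⟶ (t.truncGE c).obj Z := (t.truncGEπ c).app Z
  refine ⟨(t.truncGE c).obj Z, t.descTruncGE v c, g ≫ π, t.from_truncGE_obj_ext ?_, ?_⟩
  · obtain ⟨k, hk⟩ : ∃ k : X⟦(1 : ℤ)⟧ ⟶ _, v ≫ g ≫ π - π = h ≫ k :=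
      Triangle.yoneda_exact₃ _ hT (v ≫ g ≫ π - π) (by
        change g ≫ (v ≫ g ≫ π - π) = 0
        rw [comp_sub, ← reassoc_of% hv, reassoc_of% heg, sub_self])
    have : t.IsLE (X⟦(1 : ℤ)⟧) (c - 1) := t.isLE_shift X c 1 (c - 1)
    rw [reassoc_of% (t.π_descTruncGE v c), comp_id, ← sub_eq_zero, hk, t.zero k (c - 1) c,
      comp_zero]
  · rw [assoc, π_descTruncGE, hv]

lemma isSplitIdempotent_of_isGE_of_isLE {X : C} (a b : ℤ) (hab : a ≤ b) [t.IsGE X a]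
    [t.IsLE X b] {e : X ⟶ X} (he : e ≫ e = e) : IsSplitIdempotent e := by
  induction b, hab using Int.leInduction generalizing X with
  | base => exact t.isSplitIdempotent_of_isLE_of_isGE a he
  | succ b hab ih =>
    have := t.isGE_truncLT_obj_of_isGE X a (b + 1)
    have := t.isLE_truncGE_obj_of_isLE X (b + 1) (b + 1)
    have hidem (F : C ⥤ C) : F.map e ≫ F.map e = F.map e := by rw [← F.map_comp, he]
    have h₁ := ih (X := (t.truncLT (b + 1)).obj X) (hidem (t.truncLT (b + 1)))
    have h₃ := t.isSplitIdempotent_of_isLE_of_isGE (X := (t.truncGE (b + 1)).obj X) (b + 1)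
      (hidem (t.truncGE (b + 1)))
    exact isSplitIdempotent_hom₂ (t.triangleLTGE_distinguished (b + 1) X)
      ((t.triangleLTGE (b + 1)).map e) h₁ he h₃

end CategoryTheory.Triangulated.TStructure

/-- A small stable ∞-category (formalized via its triangulated homotopy
category) admitting a bounded t-structure is idempotent complete: every idempotent splits. -/
theorem idempotentComplete_of_bounded_t_structure
    (C : Type u) [Category.{v} C] [Preadditive C] [HasZeroObject C] [HasShift C ℤ]
    [∀ n : ℤ, (shiftFunctor C n).Additive] [Pretriangulated C]
    (t : TStructure C)
    (hbounded : ∀ X : C, ∃ n : ℕ, t.le (n : ℤ) X ∧ t.ge (-(n : ℤ)) X) :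
    IsIdempotentComplete C := by
  refine ⟨fun X e he => ?_⟩
  obtain ⟨n, hle, hge⟩ := hbounded X
  have : t.IsLE X n := ⟨hle⟩
  have : t.IsGE X (-n) := ⟨hge⟩
  exact t.isSplitIdempotent_of_isGE_of_isLE (-n) n (by lia) he
end

section
/- Let ℰ be an idempotent complete exact category, viewed via the Gabriel-Quillen embedding as an extension-closed full subcategory of an abelian category 𝒜 closed under kernels of admissible epimorphisms. A bounded-below chain complex X of objects of ℰ is acyclic (in the exact-category sense: each differential factors as an admissible epi followed by an admissible mono through cycle objects in ℰ) if and only if X has vanishing homology when regarded as a complex in 𝒜. Consequently, any bounded-below complex of ℰ-objects chain homotopy equivalent to an acyclic complex is itself acyclic, and a direct summand (in the homotopy category) of an acyclic complex is acyclic. -/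
open CategoryTheory Category Limits

universe v u

variable {A : Type u} [Category.{v} A] [Abelian A]

/-- A bounded-below complex with entries in the exact subcategory `P ⊆ A` is *acyclic in the
exact-category sense* if each differential factors as an admissible epimorphism onto a cycle
object `Z ∈ P` followed by an admissible monomorphism, `Z` being a kernel of the next
differential and a cokernel of the previous one. -/
def ExactAcyclic (P : A → Prop) (X : ChainComplex A ℕ) : Prop :=
  ∀ n : ℕ, ∃ (Z : A) (_ : P Z) (p : X.X (n + 1) ⟶ Z) (i : Z ⟶ X.X n)
    (_ : p ≫ i = X.d (n + 1) n) (hw : i ≫ X.d n (n - 1) = 0)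
    (hw' : X.d (n + 2) (n + 1) ≫ p = 0),
    Epi p ∧ Mono i ∧
    Nonempty (IsLimit (KernelFork.ofι i hw)) ∧
    Nonempty (IsColimit (CokernelCofork.ofπ p hw'))

/-! In `A`, exactness at `n` means that `X (n + 1) → ker (d n)` is an epimorphism, which is
immediate from the factorisation `X (n + 1) ↠ Z ≅ ker (d n)` of an exact-acyclic complex.
Conversely, if `X` is exact then every `ker (d n)` lies in `P` by induction on `n`:
`ker (d 0) = X 0`, and `ker (d (n + 1))` is the kernel of the epimorphism `X (n + 1) ↠ ker (d n)`
between objects of `P`. That epimorphism is a cokernel of `d (n + 2)` by exactness at `n + 1`.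
A homotopy retract of an exact complex has zero homology, which gives the last two claims. -/

namespace CategoryTheory.ShortComplex

variable {C : Type*} [Category C]

lemma exact_of_epi_comp_isKernel [Preadditive C] [CategoryWithHomology C] (S : ShortComplex C)
    {Z : C} (p : S.X₁ ⟶ Z) (i : Z ⟶ S.X₂)
    (hpi : p ≫ i = S.f) (hw : i ≫ S.g = 0) (hi : IsLimit (KernelFork.ofι i hw)) [Epi p] :
    S.Exact := by
  let φ : S ⟶ ShortComplex.mk i S.g hw := { τ₁ := p, τ₂ := 𝟙 _, τ₃ := 𝟙 _ }
  have : Epi φ.τ₁ := ‹Epi p›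
  exact (exact_iff_of_epi_of_isIso_of_mono φ).2 (exact_of_f_is_kernel (mk i S.g hw) hi)

lemma exact_of_comp_mono [HasZeroMorphisms C] (S : ShortComplex C) {Y : C} (g : S.X₂ ⟶ Y)
    (i : Y ⟶ S.X₃) [Mono i]
    (hgi : g ≫ i = S.g) (hfg : S.f ≫ g = 0) (hS : S.Exact) :
    (ShortComplex.mk S.f g hfg).Exact :=
  let φ : ShortComplex.mk S.f g hfg ⟶ S := { τ₁ := 𝟙 _, τ₂ := 𝟙 _, τ₃ := i }
  (exact_iff_of_epi_of_isIso_of_mono φ).2 hS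

end CategoryTheory.ShortComplex

lemma ChainComplex.exactAt_iff_exact_mk {C : Type*} [Category C] [HasZeroMorphisms C]
    [CategoryWithHomology C] (X : ChainComplex C ℕ) (n : ℕ) :
    X.ExactAt n ↔ (ShortComplex.mk (X.d (n + 1) n) (X.d n (n - 1)) (X.d_comp_d _ _ _)).Exact := by
  refine X.exactAt_iff' (n + 1) n (n - 1) (ChainComplex.prev ℕ n) ?_
  cases n with
  | zero => exact ChainComplex.next_nat_zero
  | succ m => exact ChainComplex.next_nat_succ m

lemma HomologicalComplex.exactAt_of_homotopy_retract {C ι : Type*} [Category C] [Preadditive C]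
    [CategoryWithHomology C] {c : ComplexShape ι} {X Y : HomologicalComplex C c}
    (i : Y ⟶ X) (r : X ⟶ Y) (h : Homotopy (i ≫ r) (𝟙 Y)) (n : ι) (hX : X.ExactAt n) :
    Y.ExactAt n := by
  rw [exactAt_iff_isZero_homology] at hX ⊢
  rw [IsZero.iff_id_eq_zero, ← homologyMap_id, ← h.homologyMap_eq, homologyMap_comp,
    hX.eq_of_tgt (homologyMap i n) 0, zero_comp]

lemma ExactAcyclic.exactAt {P : A → Prop} {X : ChainComplex A ℕ} (h : ExactAcyclic P X)
    (n : ℕ) : X.ExactAt n := by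
  obtain ⟨_, _, p, i, hpi, hw, -, hp, -, ⟨hi⟩, -⟩ := h n
  exact (X.exactAt_iff_exact_mk n).2 (ShortComplex.exact_of_epi_comp_isKernel _ p i hpi hw hi)

section

variable (P : A → Prop) [ObjectProperty.IsClosedUnderIsomorphisms P]
  (hker : ∀ (A₁ A₂ : A) (g : A₁ ⟶ A₂), Epi g → P A₁ → P A₂ → P (kernel g))
include hker

lemma ChainComplex.prop_kernel_d_of_exactAt {X : ChainComplex A ℕ} (hX : ∀ n, P (X.X n))
    (hex : ∀ n, X.ExactAt n) (n : ℕ) : P (kernel (X.d n (n - 1))) := by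
  induction n with
  | zero =>
    have hd : X.d 0 (0 - 1) = 0 := X.shape _ _ (by simp)
    exact ObjectProperty.prop_of_iso P (kernelIsoOfEq hd ≪≫ kernelZeroIsoSource).symm (hX 0)
  | succ m ih =>
    have hepi := ((X.exactAt_iff_exact_mk m).1 (hex m)).epi_kernelLift
    have e : kernel (X.d (m + 1) m) ≅
        kernel (kernel.lift (X.d m (m - 1)) (X.d (m + 1) m) (X.d_comp_d _ _ _)) :=
      kernelIsoOfEq (kernel.lift_ι _ _ _).symm ≪≫ kernelCompMono _ _
    exact ObjectProperty.prop_of_iso P e.symm (hker _ _ _ hepi (hX (m + 1)) ih)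

lemma exactAcyclic_of_exactAt {X : ChainComplex A ℕ} (hX : ∀ n, P (X.X n))
    (hex : ∀ n, X.ExactAt n) : ExactAcyclic P X := by
  intro n
  set p := kernel.lift (X.d n (n - 1)) (X.d (n + 1) n) (X.d_comp_d _ _ _)
  have hp : Epi p := ((X.exactAt_iff_exact_mk n).1 (hex n)).epi_kernelLift
  have hw' : X.d (n + 2) (n + 1) ≫ p = 0 := by ext; simp [p]
  have hT := ShortComplex.exact_of_comp_mono _ p (kernel.ι _)
    (kernel.lift_ι _ _ _) hw' ((X.exactAt_iff_exact_mk (n + 1)).1 (hex (n + 1)))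
  exact ⟨_, X.prop_kernel_d_of_exactAt P hker hX hex n, p, kernel.ι _, kernel.lift_ι _ _ _,
    kernel.condition _, hw', hp, inferInstance, ⟨kernelIsKernel _⟩, ⟨hT.gIsCokernel⟩⟩

lemma ExactAcyclic.of_homotopy_retract {X Y : ChainComplex A ℕ} (hY : ∀ n, P (Y.X n))
    (hXa : ExactAcyclic P X) (i : Y ⟶ X) (r : X ⟶ Y) (h : Homotopy (i ≫ r) (𝟙 Y)) :
    ExactAcyclic P Y :=
  exactAcyclic_of_exactAt P hker hY fun n =>
    HomologicalComplex.exactAt_of_homotopy_retract i r h n (hXa.exactAt n)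

end

theorem exactAcyclic_iff_exact_and_closure_general
    (P : A → Prop) [ObjectProperty.IsClosedUnderIsomorphisms P]
    (hker : ∀ (A₁ A₂ : A) (g : A₁ ⟶ A₂), Epi g → P A₁ → P A₂ → P (kernel g)) :
    (∀ X : ChainComplex A ℕ, (∀ n, P (X.X n)) →
      (ExactAcyclic P X ↔ ∀ n, X.ExactAt n)) ∧
    (∀ X Y : ChainComplex A ℕ, (∀ n, P (X.X n)) → (∀ n, P (Y.X n)) →
      ExactAcyclic P X → Nonempty (HomotopyEquiv Y X) → ExactAcyclic P Y) ∧
    (∀ X Y : ChainComplex A ℕ, (∀ n, P (X.X n)) → (∀ n, P (Y.X n)) →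
      ExactAcyclic P X → ∀ (i : Y ⟶ X) (r : X ⟶ Y),
        Nonempty (Homotopy (i ≫ r) (𝟙 Y)) → ExactAcyclic P Y) :=
  ⟨fun _ hX => ⟨ExactAcyclic.exactAt, exactAcyclic_of_exactAt P hker hX⟩,
    fun _ _ _ hY hX ⟨e⟩ => hX.of_homotopy_retract P hker hY e.hom e.inv e.homotopyHomInvId,
    fun _ _ _ hY hX i r ⟨h⟩ => hX.of_homotopy_retract P hker hY i r h⟩

/-- Let `ℰ` be an idempotent complete exact category, realized via the
Gabriel–Quillen embedding as an extension-closed full subcategory `P` of an abelian category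
`A`, closed under kernels of admissible epimorphisms.  Then a bounded-below complex of
`ℰ`-objects is acyclic in the exact-category sense iff it has vanishing homology in `A`;
consequently `ℰ`-complexes homotopy equivalent to, or homotopy retracts (direct summands in
the homotopy category) of, acyclic complexes are acyclic. -/
theorem exactAcyclic_iff_exact_and_closure
    (P : A → Prop) [ObjectProperty.IsClosedUnderIsomorphisms P]
    (hext : ∀ S : ShortComplex A, S.ShortExact → P S.X₁ → P S.X₃ → P S.X₂)
    (hker : ∀ (A₁ A₂ : A) (g : A₁ ⟶ A₂), Epi g → P A₁ → P A₂ → P (kernel g)) :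
    (∀ X : ChainComplex A ℕ, (∀ n, P (X.X n)) →
      (ExactAcyclic P X ↔ ∀ n, X.ExactAt n)) ∧
    (∀ X Y : ChainComplex A ℕ, (∀ n, P (X.X n)) → (∀ n, P (Y.X n)) →
      ExactAcyclic P X → Nonempty (HomotopyEquiv Y X) → ExactAcyclic P Y) ∧
    (∀ X Y : ChainComplex A ℕ, (∀ n, P (X.X n)) → (∀ n, P (Y.X n)) →
      ExactAcyclic P X → ∀ (i : Y ⟶ X) (r : X ⟶ Y),
        Nonempty (Homotopy (i ≫ r) (𝟙 Y)) → ExactAcyclic P Y) :=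
  exactAcyclic_iff_exact_and_closure_general P hker
end
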